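/- Let 0 < q ≤ 2 and let σ = (σ_s)_{s∈ℕ} be a positive sequence with ‖σ^{-1}‖_{ℓ_q} ≤ 1. Then for every n ∈ ℕ the Kolmogorov n-width of the unit ball B_{ℂ,σ} in L²(U, ℂ; μ) satisfies d_n(B_{ℂ,σ}, L²(U,ℂ;μ)) ≤ 2^{1/q} n^{-1/q}. -/

import Mathlib

open MeasureTheory
open scoped BigOperators

/-- The Kolmogorov `n`-width of a set `F` in a normed space `E`. -/
noncomputable def kolWidth {E : Type*} [NormedAddCommGroup E] [NormedSpace ℂ E]
    (n : ℕ) (F : Set E) : ℝ :=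
  sInf {d : ℝ | ∃ L : Submodule ℂ E, FiniteDimensional ℂ ↥L ∧
    Module.finrank ℂ ↥L ≤ n ∧
    d = sSup {e : ℝ | ∃ f ∈ F, e = sInf {r : ℝ | ∃ g ∈ L, r = ‖f - g‖}}}

/-!
The span `L` of the first `n` basis vectors does the job. Truncating the expansion of `f` after
`n` terms leaves the tail `∑_{s ≥ n} |f_s|² ≤ σ_n⁻² ∑_s σ_s² |f_s|² ≤ σ_n⁻²`, because `σ` is
increasing. Because `σ_s^{-q}` is decreasing with sum at most `1`, `(n + 1) σ_n^{-q} ≤ 1`, that is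
`σ_n⁻¹ ≤ (n + 1)^{-1/q} ≤ n^{-1/q}`.

Since the weighted sum is a `tsum`, the set also contains every `f` whose weighted series diverges,
together with all its multiples. Such an `f` is harmless: either its distance to `L` is `0`, or its multiples
make the distances to `L` unbounded and `sSup` takes its junk value `0`.
-/

open Metric Finset
open scoped Pointwise

theorem Antitone.succ_mul_le_tsum {a : ℕ → ℝ} (ha : Antitone a) (ha0 : ∀ s, 0 ≤ a s)
    (hs : Summable a) (n : ℕ) : ((n : ℝ) + 1) * a n ≤ ∑' s, a s :=
  calc ((n : ℝ) + 1) * a n = ∑ _s ∈ range (n + 1), a n := by simp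
    _ ≤ ∑ s ∈ range (n + 1), a s :=
        sum_le_sum fun s hs => ha (Nat.lt_succ_iff.mp (mem_range.mp hs))
    _ ≤ ∑' s, a s := hs.sum_le_tsum _ fun s _ => ha0 s

theorem inv_le_rpow_neg_of_tsum_inv_rpow_le {σ : ℕ → ℝ} (hσpos : ∀ s, 0 < σ s)
    (hσ : Monotone σ) {q : ℝ} (hq : 0 < q) (hsum : Summable fun s => (σ s)⁻¹ ^ q)
    (hnorm : ∑' s, (σ s)⁻¹ ^ q ≤ 1) (n : ℕ) :
    (σ n)⁻¹ ≤ ((n : ℝ) + 1) ^ (-(1 / q)) := by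
  have hσinv (s : ℕ) : 0 ≤ (σ s)⁻¹ := inv_nonneg.mpr (hσpos s).le
  have hanti : Antitone fun s => (σ s)⁻¹ ^ q := fun s t hst =>
    Real.rpow_le_rpow (hσinv t) (inv_anti₀ (hσpos s) (hσ hst)) hq.le
  have key := (hanti.succ_mul_le_tsum (fun s => Real.rpow_nonneg (hσinv s) q) hsum n).trans hnorm
  rw [← le_div_iff₀' (by positivity), one_div] at key
  rwa [Real.rpow_neg (by positivity), ← Real.inv_rpow (by positivity), one_div,
    Real.le_rpow_inv_iff_of_pos (hσinv n) (by positivity) hq]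

section HilbertBasis

variable {𝕜 E : Type*} [RCLike 𝕜] [NormedAddCommGroup E] [InnerProductSpace 𝕜 E]

theorem HilbertBasis.hasSum_norm_sq_repr {ι : Type*} (b : HilbertBasis ι 𝕜 E) (x : E) :
    HasSum (fun i => ‖b.repr x i‖ ^ 2) (‖x‖ ^ 2) := by
  simpa only [ENNReal.toReal_ofNat, Real.rpow_two, b.repr.norm_map] using
    lp.hasSum_norm (p := 2) (by norm_num) (b.repr x)

theorem HilbertBasis.summable_mul_norm_repr_smul_sq_iff {ι : Type*} (b : HilbertBasis ι 𝕜 E)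
    (w : ι → ℝ) {c : 𝕜} (hc : c ≠ 0) (x : E) :
    Summable (fun i => w i * ‖b.repr (c • x) i‖ ^ 2) ↔
      Summable (fun i => w i * ‖b.repr x i‖ ^ 2) := by
  have hterm (i : ι) : w i * ‖b.repr (c • x) i‖ ^ 2 = ‖c‖ ^ 2 * (w i * ‖b.repr x i‖ ^ 2) := by
    rw [map_smul, lp.coeFn_smul, Pi.smul_apply, norm_smul]
    ring
  simp_rw [hterm]
  exact summable_mul_left_iff (pow_ne_zero 2 (norm_ne_zero_iff.mpr hc))

theorem HilbertBasis.repr_sub_sum_range (b : HilbertBasis ℕ 𝕜 E) (x : E) (n t : ℕ) :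
    b.repr (x - ∑ s ∈ range n, b.repr x s • b s) t = if t < n then 0 else b.repr x t := by
  classical
  simp only [b.repr_apply_apply, inner_sub_right, inner_sum, inner_smul_right,
    orthonormal_iff_ite.mp b.orthonormal, mul_ite, mul_one, mul_zero, sum_ite_eq, mem_range]
  split_ifs <;> simp

theorem HilbertBasis.norm_sub_sum_range_sq_le (b : HilbertBasis ℕ 𝕜 E) (x : E) {σ : ℕ → ℝ}
    (hσ : Monotone σ) {n : ℕ} (hσn : 0 < σ n)
    (hx : Summable fun s => σ s ^ 2 * ‖b.repr x s‖ ^ 2) :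
    ‖x - ∑ s ∈ range n, b.repr x s • b s‖ ^ 2 ≤
      (σ n)⁻¹ ^ 2 * ∑' s, σ s ^ 2 * ‖b.repr x s‖ ^ 2 := by
  refine hasSum_le (fun t => ?_) (b.hasSum_norm_sq_repr _) (hx.hasSum.mul_left _)
  rw [b.repr_sub_sum_range]
  split_ifs with ht
  · rw [norm_zero, zero_pow two_ne_zero]
    positivity
  · have hweight : 1 ≤ (σ n)⁻¹ ^ 2 * σ t ^ 2 := by
      rw [← mul_pow, inv_mul_eq_div]
      exact one_le_pow₀ ((one_le_div hσn).mpr (hσ (not_lt.mp ht)))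
    calc ‖b.repr x t‖ ^ 2 ≤ ((σ n)⁻¹ ^ 2 * σ t ^ 2) * ‖b.repr x t‖ ^ 2 :=
          le_mul_of_one_le_left (by positivity) hweight
      _ = _ := by ring

theorem HilbertBasis.infDist_span_le (b : HilbertBasis ℕ 𝕜 E) {σ : ℕ → ℝ} (hσ : Monotone σ)
    {n : ℕ} (hσn : 0 < σ n) {x : E} (hx : Summable fun s => σ s ^ 2 * ‖b.repr x s‖ ^ 2)
    (hx1 : ∑' s, σ s ^ 2 * ‖b.repr x s‖ ^ 2 ≤ 1) :
    infDist x (Submodule.span 𝕜 (Set.range fun s : Fin n => b s)) ≤ (σ n)⁻¹ := by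
  have hmem : ∑ s ∈ range n, b.repr x s • b s ∈
      Submodule.span 𝕜 (Set.range fun s : Fin n => b s) :=
    Submodule.sum_mem _ fun s hs => Submodule.smul_mem _ _
      (Submodule.subset_span ⟨⟨s, mem_range.mp hs⟩, rfl⟩)
  refine (infDist_le_dist_of_mem hmem).trans ?_
  rw [dist_eq_norm, ← pow_le_pow_iff_left₀ (norm_nonneg _) (inv_nonneg.mpr hσn.le) two_ne_zero]
  calc _ ≤ (σ n)⁻¹ ^ 2 * ∑' s, σ s ^ 2 * ‖b.repr x s‖ ^ 2 := b.norm_sub_sum_range_sq_le x hσ hσn hx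
    _ ≤ (σ n)⁻¹ ^ 2 := mul_le_of_le_one_right (by positivity) hx1

end HilbertBasis

section Width

variable {E : Type*} [NormedAddCommGroup E] [NormedSpace ℂ E]

theorem sInf_norm_sub_eq_infDist (L : Submodule ℂ E) (f : E) :
    sInf {r : ℝ | ∃ g ∈ L, r = ‖f - g‖} = infDist f L := by
  rw [infDist_eq_iInf, ← sInf_range]
  congr 1
  ext r
  simp [dist_eq_norm, eq_comm]

theorem Submodule.infDist_smul (L : Submodule ℂ E) {c : ℂ} (hc : c ≠ 0) (f : E) :
    infDist (c • f) L = ‖c‖ * infDist f L := by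
  have hL : c • (L : Set E) = L := by
    ext x
    rw [Set.mem_smul_set_iff_inv_smul_mem₀ hc, SetLike.mem_coe, SetLike.mem_coe,
      L.smul_mem_iff (inv_ne_zero hc)]
  rw [← infDist_smul₀ hc, hL]

theorem kolWidth_le_sSup_infDist (L : Submodule ℂ E) [FiniteDimensional ℂ L] {n : ℕ}
    (hL : Module.finrank ℂ L ≤ n) (F : Set E) :
    kolWidth n F ≤ sSup {e : ℝ | ∃ f ∈ F, e = infDist f L} := by
  simp_rw [kolWidth, sInf_norm_sub_eq_infDist]
  refine csInf_le ⟨0, ?_⟩ ⟨L, inferInstance, hL, rfl⟩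
  rintro d ⟨L', -, -, rfl⟩
  exact Real.sSup_nonneg fun e ⟨f, _, he⟩ => he ▸ infDist_nonneg

theorem sSup_infDist_le (L : Submodule ℂ E) {F : Set E} {B : ℝ} (hB : 0 ≤ B)
    (hF : ∀ f ∈ F, infDist f L ≤ B ∨ ∀ c : ℂ, c ≠ 0 → c • f ∈ F) :
    sSup {e : ℝ | ∃ f ∈ F, e = infDist f L} ≤ B := by
  by_cases hbdd : BddAbove {e : ℝ | ∃ f ∈ F, e = infDist f L}
  · obtain ⟨M, hM⟩ := hbdd
    refine Real.sSup_le ?_ hB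
    rintro e ⟨f, hf, rfl⟩
    rcases hF f hf with hfB | hcone
    · exact hfB
    · refine le_trans (le_of_not_gt fun hd => ?_) hB
      obtain ⟨k, hk⟩ := exists_nat_gt (M / infDist f L)
      have hc : ((k + 1 : ℕ) : ℂ) ≠ 0 := Nat.cast_ne_zero.mpr k.succ_ne_zero
      have hkM := hM ⟨_, hcone _ hc, rfl⟩
      rw [L.infDist_smul hc, Complex.norm_natCast, Nat.cast_succ] at hkM
      rw [div_lt_iff₀ hd] at hk
      linarith
  · rw [Real.sSup_of_not_bddAbove hbdd]
    exact hB

end Width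

theorem stmt_5_general
    {U : Type*} [MeasurableSpace U] (μ : Measure U)
    (φ : HilbertBasis ℕ ℂ (Lp ℂ 2 μ))
    (σ : ℕ → ℝ) (hσpos : ∀ s, 0 < σ s) (hσmono : Monotone σ)
    (q : ℝ) (hq : 0 < q)
    (hsum : Summable fun s => ((σ s)⁻¹) ^ q)
    (hnorm : (∑' s, ((σ s)⁻¹) ^ q) ≤ 1)
    (n : ℕ) (hn : 1 ≤ n) :
    kolWidth n {f : Lp ℂ 2 μ | ∑' s, (σ s) ^ 2 * ‖φ.repr f s‖ ^ 2 ≤ 1}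
      ≤ (2 : ℝ) ^ (1 / q) * (n : ℝ) ^ (-(1 / q)) := by
  have hn0 : (0 : ℝ) < n := Nat.cast_pos.mpr hn
  have hσn : (σ n)⁻¹ ≤ (2 : ℝ) ^ (1 / q) * (n : ℝ) ^ (-(1 / q)) :=
    calc (σ n)⁻¹ ≤ ((n : ℝ) + 1) ^ (-(1 / q)) :=
          inv_le_rpow_neg_of_tsum_inv_rpow_le hσpos hσmono hq hsum hnorm n
      _ ≤ (n : ℝ) ^ (-(1 / q)) :=
          Real.rpow_le_rpow_of_nonpos hn0 (by linarith) (by simp [hq.le])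
      _ ≤ _ := le_mul_of_one_le_left (by positivity) (Real.one_le_rpow one_le_two (by positivity))
  set L := Submodule.span ℂ (Set.range fun s : Fin n => φ s)
  have : FiniteDimensional ℂ L := FiniteDimensional.span_of_finite ℂ (Set.finite_range _)
  refine (kolWidth_le_sSup_infDist L ((finrank_range_le_card _).trans_eq (Fintype.card_fin n)) _).trans
    (sSup_infDist_le L (by positivity) fun f hf => ?_)
  by_cases hs : Summable fun s => σ s ^ 2 * ‖φ.repr f s‖ ^ 2
  · exact .inl ((φ.infDist_span_le hσmono (hσpos n) hs hf).trans hσn)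
  · refine .inr fun c hc => ?_
    rw [← φ.summable_mul_norm_repr_smul_sq_iff _ hc] at hs
    rw [Set.mem_ofPred_eq, tsum_eq_zero_of_not_summable hs]
    exact zero_le_one

/-- if `0 < q ≤ 2` and `‖σ⁻¹‖_{ℓ_q} ≤ 1` then the Kolmogorov `n`-width of
the unit ball `B_{ℂ,σ}` in `L²(U,ℂ;μ)` is at most `2^{1/q} n^{-1/q}` for every `n ≥ 1`. -/
theorem stmt_5
    {U : Type*} [MeasurableSpace U] (μ : Measure U) [IsProbabilityMeasure μ]
    (φ : HilbertBasis ℕ ℂ (Lp ℂ 2 μ))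
    (σ : ℕ → ℝ) (hσpos : ∀ s, 0 < σ s) (hσmono : Monotone σ)
    (q : ℝ) (hq : 0 < q) (hq2 : q ≤ 2)
    (hsum : Summable fun s => ((σ s)⁻¹) ^ q)
    (hnorm : (∑' s, ((σ s)⁻¹) ^ q) ≤ 1)
    (n : ℕ) (hn : 1 ≤ n) :
    kolWidth n {f : Lp ℂ 2 μ | ∑' s, (σ s) ^ 2 * ‖φ.repr f s‖ ^ 2 ≤ 1}
      ≤ (2 : ℝ) ^ (1 / q) * (n : ℝ) ^ (-(1 / q)) :=
  stmt_5_general μ φ σ hσpos hσmono q hq hsum hnorm n hn
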